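/- Let u, v ∈ ℤ² with u₁·v₂ − u₂·v₁ = 1, let V, O ∈ ℝ², and let d, s be real numbers with 0 ≤ s ≤ d. If u₁·(O−V)₂ − u₂·(O−V)₁ ≥ d and (O−V)₁·v₂ − (O−V)₂·v₁ ≥ d, then (O − V − s·u)₁·(v−u)₂ − (O − V − s·u)₂·(v−u)₁ ≥ d; in fact the left-hand side equals (u₁·(O−V)₂ − u₂·(O−V)₁) + ((O−V)₁·v₂ − (O−V)₂·v₁) − s. -/
import Mathlib


/-- Corner chopping preserves affine distance bounds: if a point `O` has signed
affine distance at least `d` to the two edge-lines at a Delzant corner `V`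
(with primitive directions `u, v` of determinant `1`), and the corner is chopped
with size `s ≤ d`, then `O` has signed affine distance at least `d` to the new
edge-line, which in fact equals the sum of the two old distances minus `s`. -/
theorem corner_chop_affine_distance
    (u v : ℤ × ℤ) (hdet : u.1 * v.2 - u.2 * v.1 = 1)
    (V O : ℝ × ℝ) (d s : ℝ) (hs0 : 0 ≤ s) (hsd : s ≤ d)
    (h1 : (u.1 : ℝ) * (O.2 - V.2) - (u.2 : ℝ) * (O.1 - V.1) ≥ d)
    (h2 : (O.1 - V.1) * (v.2 : ℝ) - (O.2 - V.2) * (v.1 : ℝ) ≥ d) :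
    (O.1 - V.1 - s * (u.1 : ℝ)) * ((v.2 : ℝ) - (u.2 : ℝ))
        - (O.2 - V.2 - s * (u.2 : ℝ)) * ((v.1 : ℝ) - (u.1 : ℝ)) ≥ d ∧
    (O.1 - V.1 - s * (u.1 : ℝ)) * ((v.2 : ℝ) - (u.2 : ℝ))
        - (O.2 - V.2 - s * (u.2 : ℝ)) * ((v.1 : ℝ) - (u.1 : ℝ))
      = ((u.1 : ℝ) * (O.2 - V.2) - (u.2 : ℝ) * (O.1 - V.1))
        + ((O.1 - V.1) * (v.2 : ℝ) - (O.2 - V.2) * (v.1 : ℝ)) - s := by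
  have hdetR : (u.1:ℝ) * v.2 - (u.2:ℝ) * v.1 = 1 := by exact_mod_cast hdet
  have heq : (O.1 - V.1 - s * (u.1 : ℝ)) * ((v.2 : ℝ) - (u.2 : ℝ))
        - (O.2 - V.2 - s * (u.2 : ℝ)) * ((v.1 : ℝ) - (u.1 : ℝ))
      = ((u.1 : ℝ) * (O.2 - V.2) - (u.2 : ℝ) * (O.1 - V.1))
        + ((O.1 - V.1) * (v.2 : ℝ) - (O.2 - V.2) * (v.1 : ℝ)) - s := by
    nlinarith [hdetR]
  refine ⟨?_, heq⟩
  rw [heq]; linarith
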